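/- arXiv:math/0108160 — 5 statements merged into one kernel-verified Lean document; each statement's English description precedes it below -/
import Mathlib

section
/- Let V be a vector space, W an abelian group, and B₁, B₂ : V × V → W two antisymmetric bilinear maps (i.e. Bᵢ(x,y) = −Bᵢ(y,x)). Suppose H₀, H₁, H₂, … is a sequence of elements of V satisfying the recursion B₁(x, H_{p+1}) = B₂(x, H_p) for all x ∈ V and all p ≥ 0. Then B₁(H_p, H_q) = 0 and B₂(H_p, H_q) = 0 for all p, q ≥ 0. -/
/-- Lenard–Magri lemma: two antisymmetric bilinear brackets and a sequence of
Hamiltonians related by the bihamiltonian recursion pairwise commute. -/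
theorem stmt_0 {V W : Type*} [AddCommGroup V] [AddCommGroup W] [Module ℝ V] [Module ℝ W]
    (B₁ B₂ : V →ₗ[ℝ] V →ₗ[ℝ] W)
    (h₁ : ∀ x y : V, B₁ x y = - B₁ y x) (h₂ : ∀ x y : V, B₂ x y = - B₂ y x)
    (H : ℕ → V) (hrec : ∀ (x : V) (p : ℕ), B₁ x (H (p + 1)) = B₂ x (H p)) :
    ∀ p q : ℕ, B₁ (H p) (H q) = 0 ∧ B₂ (H p) (H q) = 0 := by
  have key : ∀ p q : ℕ, B₁ (H (p + 1)) (H q) = B₁ (H p) (H (q + 1)) := by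
    intro p q
    calc B₁ (H (p + 1)) (H q) = - B₁ (H q) (H (p + 1)) := h₁ _ _
      _ = - B₂ (H q) (H p) := by rw [hrec]
      _ = B₂ (H p) (H q) := by rw [h₂ (H q) (H p), neg_neg]
      _ = B₁ (H p) (H (q + 1)) := (hrec _ _).symm
  have shift : ∀ k p q : ℕ, B₁ (H (p + k)) (H q) = B₁ (H p) (H (q + k)) := by
    intro k
    induction k with
    | zero => simp
    | succ n ih =>
      intro p q
      calc B₁ (H (p + (n + 1))) (H q) = B₁ (H ((p + 1) + n)) (H q) := by ring_nf
        _ = B₁ (H (p + 1)) (H (q + n)) := ih _ _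
        _ = B₁ (H p) (H (q + n + 1)) := key _ _
        _ = B₁ (H p) (H (q + (n + 1))) := by ring_nf
  have self : ∀ r : ℕ, B₁ (H r) (H r) = 0 := by
    intro r
    have h := h₁ (H r) (H r)
    have h2 : (2:ℝ) • B₁ (H r) (H r) = 0 := by
      rw [two_smul]
      nth_rewrite 2 [h]
      abel
    have := congrArg (fun w => (2:ℝ)⁻¹ • w) h2
    simpa [smul_smul] using this
  have B1zero : ∀ p q : ℕ, B₁ (H p) (H q) = 0 := by
    have half : ∀ p d : ℕ, B₁ (H p) (H (p + d)) = 0 := by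
      intro p d
      rcases Nat.even_or_odd d with ⟨k, hk⟩ | ⟨k, hk⟩
      · subst hk
        have := shift k p (p + k)
        rw [← two_mul] at *
        calc B₁ (H p) (H (p + 2 * k)) = B₁ (H p) (H ((p + k) + k)) := by ring_nf
          _ = B₁ (H (p + k)) (H (p + k)) := (shift k p (p + k)).symm
          _ = 0 := self _
      · subst hk
        have e1 : B₁ (H p) (H (p + (2 * k + 1))) = B₁ (H (p + k)) (H (p + k + 1)) := by
          calc B₁ (H p) (H (p + (2 * k + 1))) = B₁ (H p) (H ((p + k + 1) + k)) := by ring_nf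
            _ = B₁ (H (p + k)) (H (p + k + 1)) := (shift k p (p + k + 1)).symm
        have e2 : B₁ (H p) (H (p + (2 * k + 1))) = B₁ (H (p + k + 1)) (H (p + k)) := by
          calc B₁ (H p) (H (p + (2 * k + 1))) = B₁ (H p) (H ((p + k) + (k + 1))) := by ring_nf
            _ = B₁ (H (p + (k + 1))) (H (p + k)) := (shift (k + 1) p (p + k)).symm
            _ = B₁ (H (p + k + 1)) (H (p + k)) := by ring_nf
        have e3 : B₁ (H (p + k)) (H (p + k + 1)) = - B₁ (H (p + k + 1)) (H (p + k)) := h₁ _ _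
        have h2 : (2:ℝ) • B₁ (H p) (H (p + (2 * k + 1))) = 0 := by
          rw [two_smul]
          nth_rewrite 1 [e1]
          nth_rewrite 1 [e2]
          rw [e3]
          abel
        have := congrArg (fun w => (2:ℝ)⁻¹ • w) h2
        simpa [smul_smul] using this
    intro p q
    rcases le_total p q with h | h
    · obtain ⟨d, rfl⟩ := Nat.exists_eq_add_of_le h
      exact half p d
    · obtain ⟨d, rfl⟩ := Nat.exists_eq_add_of_le h
      rw [h₁, half, neg_zero]
  intro p q
  refine ⟨B1zero p q, ?_⟩
  rw [← hrec (H p) q, B1zero]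
end

section
/- Let v : ℝ → ℝ be smooth, ε ∈ ℝ, and set u := v²/4 + ε·v'. Then for every smooth φ : ℝ → ℝ the following identity of differential operators holds: (v/2 + ε·d/dx) ∘ (d/dx) ∘ (v/2 − ε·d/dx) applied to φ equals u·φ' + (1/2)·u'·φ − ε²·φ'''. -/
/-- The Miura transformation `u = v²/4 + ε v'` intertwines the constant bracket and
the Magri bracket: `(v/2 + ε∂ₓ) ∘ ∂ₓ ∘ (v/2 - ε∂ₓ) φ = u φ' + (1/2)u' φ - ε² φ'''`. -/
theorem stmt_8 (v : ℝ → ℝ) (hv : ContDiff ℝ (⊤ : ℕ∞) v) (ε : ℝ)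
    (u : ℝ → ℝ) (hu : ∀ x, u x = (v x) ^ 2 / 4 + ε * deriv v x) :
    ∀ φ : ℝ → ℝ, ContDiff ℝ (⊤ : ℕ∞) φ → ∀ x : ℝ,
      v x / 2 * deriv (fun y => v y / 2 * φ y - ε * deriv φ y) x
        + ε * deriv (fun y => deriv (fun z => v z / 2 * φ z - ε * deriv φ z) y) x
      = u x * deriv φ x + (1 / 2) * deriv u x * φ x - ε ^ 2 * iteratedDeriv 3 φ x := by
  intro φ hφ x
  have h1i : ((⊤ : ℕ∞) : WithTop ℕ∞) ≠ 0 := by simp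
  have hv0 : ContDiff ℝ ((⊤ : ℕ∞) : WithTop ℕ∞) v := hv.of_le (by simp)
  have hφ0 : ContDiff ℝ ((⊤ : ℕ∞) : WithTop ℕ∞) φ := hφ.of_le (by simp)
  have hv1 : ContDiff ℝ ((⊤ : ℕ∞) : WithTop ℕ∞) (deriv v) := (contDiff_infty_iff_deriv.mp hv0).2
  have hv2 : ContDiff ℝ ((⊤ : ℕ∞) : WithTop ℕ∞) (deriv (deriv v)) := (contDiff_infty_iff_deriv.mp hv1).2
  have hφ1 : ContDiff ℝ ((⊤ : ℕ∞) : WithTop ℕ∞) (deriv φ) := (contDiff_infty_iff_deriv.mp hφ0).2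
  have hφ2 : ContDiff ℝ ((⊤ : ℕ∞) : WithTop ℕ∞) (deriv (deriv φ)) := (contDiff_infty_iff_deriv.mp hφ1).2
  -- first derivative of the inner function
  have D1 : ∀ y, HasDerivAt (fun z => v z / 2 * φ z - ε * deriv φ z)
      (deriv v y / 2 * φ y + v y / 2 * deriv φ y - ε * deriv (deriv φ) y) y := by
    intro y
    exact (((hv0.differentiable h1i y).hasDerivAt.div_const 2).mul
      (hφ0.differentiable h1i y).hasDerivAt).sub
      (((hφ1.differentiable h1i y).hasDerivAt).const_mul ε)
  have hD1 : deriv (fun z => v z / 2 * φ z - ε * deriv φ z)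
      = fun y => deriv v y / 2 * φ y + v y / 2 * deriv φ y - ε * deriv (deriv φ) y :=
    funext fun y => (D1 y).deriv
  -- second derivative
  have D2 : HasDerivAt (fun y => deriv v y / 2 * φ y + v y / 2 * deriv φ y
        - ε * deriv (deriv φ) y)
      ((deriv (deriv v) x / 2 * φ x + deriv v x / 2 * deriv φ x)
        + (deriv v x / 2 * deriv φ x + v x / 2 * deriv (deriv φ) x)
        - ε * deriv (deriv (deriv φ)) x) x := by
    exact ((((hv1.differentiable h1i x).hasDerivAt.div_const 2).mul
      (hφ0.differentiable h1i x).hasDerivAt).add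
      (((hv0.differentiable h1i x).hasDerivAt.div_const 2).mul
        (hφ1.differentiable h1i x).hasDerivAt)).sub
      (((hφ2.differentiable h1i x).hasDerivAt).const_mul ε)
  -- derivative of u
  have hU : HasDerivAt u (v x * deriv v x / 4 * 2 + ε * deriv (deriv v) x) x := by
    have : HasDerivAt (fun y => (v y) ^ 2 / 4 + ε * deriv v y)
        (2 * v x ^ 1 * deriv v x / 4 + ε * deriv (deriv v) x) x :=
      (((hv0.differentiable h1i x).hasDerivAt.pow 2).div_const 4).add
        (((hv1.differentiable h1i x).hasDerivAt).const_mul ε)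
    have h := this.congr_of_eventuallyEq (Filter.Eventually.of_forall fun y => (hu y))
    rw [show v x * deriv v x / 4 * 2 + ε * deriv (deriv v) x
        = 2 * v x ^ 1 * deriv v x / 4 + ε * deriv (deriv v) x by ring]
    exact h
  have hderivu : deriv u x = v x * deriv v x / 4 * 2 + ε * deriv (deriv v) x := hU.deriv
  have h3 : iteratedDeriv 3 φ x = deriv (deriv (deriv φ)) x := by
    simp [iteratedDeriv_succ, iteratedDeriv_zero]
  simp only [hD1]
  rw [D2.deriv, hderivu, hu x, h3]
  ring
end

section
/- Let v : ℝ² → ℝ be smooth with ∂_x v nowhere vanishing and satisfying ∂_t v = v·∂_x v. Set g := log(∂_x v) (assuming ∂_x v > 0) and w := ∂_x² g. Then ∂_t w = ∂_x(v·w) + 2·∂_x³ v. -/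
/-- Partial derivative with respect to the first (space) variable. -/
noncomputable def pdx (f : ℝ × ℝ → ℝ) (p : ℝ × ℝ) : ℝ := deriv (fun y => f (y, p.2)) p.1

/-- Partial derivative with respect to the second (time) variable. -/
noncomputable def pdt (f : ℝ × ℝ → ℝ) (p : ℝ × ℝ) : ℝ := deriv (fun s => f (p.1, s)) p.2

private lemma hasDerivAt_sectx {f : ℝ × ℝ → ℝ} (hf : Differentiable ℝ f) (p : ℝ × ℝ) :
    HasDerivAt (fun y => f (y, p.2)) (pdx f p) p.1 := by
  have h : DifferentiableAt ℝ (fun y => f (y, p.2)) p.1 :=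
    ((hf.comp (differentiable_id.prodMk (differentiable_const p.2))) p.1 : _)
  exact h.hasDerivAt

private lemma hasDerivAt_sectt {f : ℝ × ℝ → ℝ} (hf : Differentiable ℝ f) (p : ℝ × ℝ) :
    HasDerivAt (fun s => f (p.1, s)) (pdt f p) p.2 := by
  have h : DifferentiableAt ℝ (fun s => f (p.1, s)) p.2 :=
    ((hf.comp ((differentiable_const p.1).prodMk differentiable_id)) p.2 : _)
  exact h.hasDerivAt

private lemma pdx_eq_fderiv {f : ℝ × ℝ → ℝ} (hf : Differentiable ℝ f) (p : ℝ × ℝ) :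
    pdx f p = fderiv ℝ f p (1, 0) := by
  have h1 : HasDerivAt (fun y : ℝ => (y, p.2)) ((1 : ℝ), (0 : ℝ)) p.1 :=
    (hasDerivAt_id p.1).prodMk (hasDerivAt_const _ _)
  have h2 := (hf (p.1, p.2)).hasFDerivAt.comp_hasDerivAt p.1 h1
  simpa [pdx, Function.comp_def] using h2.deriv

private lemma pdt_eq_fderiv {f : ℝ × ℝ → ℝ} (hf : Differentiable ℝ f) (p : ℝ × ℝ) :
    pdt f p = fderiv ℝ f p (0, 1) := by
  have h1 : HasDerivAt (fun s : ℝ => (p.1, s)) ((0 : ℝ), (1 : ℝ)) p.2 :=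
    (hasDerivAt_const _ _).prodMk (hasDerivAt_id p.2)
  have h2 := (hf (p.1, p.2)).hasFDerivAt.comp_hasDerivAt p.2 h1
  simpa [pdt, Function.comp_def] using h2.deriv

private lemma contDiff_pdx {f : ℝ × ℝ → ℝ} (hf : ContDiff ℝ (⊤ : ℕ∞) f) : ContDiff ℝ (⊤ : ℕ∞) (pdx f) := by
  have h : pdx f = fun p => fderiv ℝ f p (1, 0) :=
    funext fun p => pdx_eq_fderiv (hf.differentiable (by simp)) p
  rw [h]
  exact (hf.fderiv_right (by simp)).clm_apply contDiff_const

private lemma pdt_pdx_comm {f : ℝ × ℝ → ℝ} (hf : ContDiff ℝ (⊤ : ℕ∞) f) (p : ℝ × ℝ) :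
    pdt (pdx f) p = pdx (pdt f) p := by
  have hdf : Differentiable ℝ f := hf.differentiable (by simp)
  have hdfd : Differentiable ℝ (fderiv ℝ f) :=
    (hf.fderiv_right (m := (⊤ : ℕ∞)) (by simp)).differentiable (by simp)
  have hx : pdx f = fun q => fderiv ℝ f q (1, 0) := funext fun q => pdx_eq_fderiv hdf q
  have ht : pdt f = fun q => fderiv ℝ f q (0, 1) := funext fun q => pdt_eq_fderiv hdf q
  have key : ∀ a : ℝ × ℝ, HasFDerivAt (fun q => fderiv ℝ f q a)
      ((ContinuousLinearMap.apply ℝ ℝ a).comp (fderiv ℝ (fderiv ℝ f) p)) p := fun a =>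
    ((ContinuousLinearMap.apply ℝ ℝ a).hasFDerivAt).comp p (hdfd p).hasFDerivAt
  have h1 : pdt (pdx f) p = fderiv ℝ (fderiv ℝ f) p (0, 1) (1, 0) := by
    rw [hx]
    have hc : HasDerivAt (fun s : ℝ => (p.1, s)) ((0 : ℝ), (1 : ℝ)) p.2 :=
      (hasDerivAt_const _ _).prodMk (hasDerivAt_id p.2)
    have := ((key ((1 : ℝ), (0 : ℝ))).comp_hasDerivAt p.2 (by simpa using hc)).deriv
    simpa [pdt, Function.comp_def] using this
  have h2 : pdx (pdt f) p = fderiv ℝ (fderiv ℝ f) p (1, 0) (0, 1) := by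
    rw [ht]
    have hc : HasDerivAt (fun y : ℝ => (y, p.2)) ((1 : ℝ), (0 : ℝ)) p.1 :=
      (hasDerivAt_id p.1).prodMk (hasDerivAt_const _ _)
    have := ((key ((0 : ℝ), (1 : ℝ))).comp_hasDerivAt p.1 (by simpa using hc)).deriv
    simpa [pdx, Function.comp_def] using this
  rw [h1, h2]
  exact second_derivative_symmetric (fun y => (hdf y).hasFDerivAt)
    (hdfd p).hasFDerivAt _ _

private lemma pdx_mul {f h : ℝ × ℝ → ℝ} (hf : Differentiable ℝ f) (hh : Differentiable ℝ h)
    (p : ℝ × ℝ) : pdx (fun q => f q * h q) p = pdx f p * h p + f p * pdx h p := by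
  have := ((hasDerivAt_sectx hf p).mul (hasDerivAt_sectx hh p)).deriv
  simpa [pdx, Pi.mul_def] using this

private lemma pdx_add {f h : ℝ × ℝ → ℝ} (hf : Differentiable ℝ f) (hh : Differentiable ℝ h)
    (p : ℝ × ℝ) : pdx (fun q => f q + h q) p = pdx f p + pdx h p := by
  have := ((hasDerivAt_sectx hf p).add (hasDerivAt_sectx hh p)).deriv
  simpa [pdx, Pi.add_def] using this

private lemma pdx_const_mul {f : ℝ × ℝ → ℝ} (hf : Differentiable ℝ f) (c : ℝ)
    (p : ℝ × ℝ) : pdx (fun q => c * f q) p = c * pdx f p := by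
  have := ((hasDerivAt_sectx hf p).const_mul c).deriv
  simpa [pdx] using this

private lemma pdx_log {h : ℝ × ℝ → ℝ} (hh : Differentiable ℝ h) (hne : ∀ q, h q ≠ 0)
    (p : ℝ × ℝ) : pdx (fun q => Real.log (h q)) p = pdx h p / h p := by
  have := ((hasDerivAt_sectx hh p).log (hne (p.1, p.2))).deriv
  simpa [pdx] using this

private lemma pdt_log {h : ℝ × ℝ → ℝ} (hh : Differentiable ℝ h) (hne : ∀ q, h q ≠ 0)
    (p : ℝ × ℝ) : pdt (fun q => Real.log (h q)) p = pdt h p / h p := by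
  have := ((hasDerivAt_sectt hh p).log (hne (p.1, p.2))).deriv
  simpa [pdt] using this

/-- Order-ε² coefficient of the quasitriviality of KdV: if `v_t = v v_x` and
`w = ∂ₓ²(log v_x)` then `w_t = ∂ₓ(v w) + 2 v_xxx`. -/
theorem stmt_9 (v : ℝ × ℝ → ℝ) (hv : ContDiff ℝ (⊤ : ℕ∞) v)
    (hpos : ∀ p : ℝ × ℝ, 0 < pdx v p)
    (heq : ∀ p : ℝ × ℝ, pdt v p = v p * pdx v p) :
    ∀ p : ℝ × ℝ,
      pdt (pdx (pdx fun q => Real.log (pdx v q))) p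
        = pdx (fun q => v q * pdx (pdx fun r => Real.log (pdx v r)) q) p
          + 2 * pdx (pdx (pdx v)) p := by
  intro p
  have hvD : Differentiable ℝ v := hv.differentiable (by simp)
  have hus : ContDiff ℝ (⊤ : ℕ∞) (pdx v) := contDiff_pdx hv
  have huD : Differentiable ℝ (pdx v) := hus.differentiable (by simp)
  have hune : ∀ q, pdx v q ≠ 0 := fun q => (hpos q).ne'
  set g : ℝ × ℝ → ℝ := fun q => Real.log (pdx v q) with hgdef
  have hgs : ContDiff ℝ (⊤ : ℕ∞) g := hus.log hune
  have hgD : Differentiable ℝ g := hgs.differentiable (by simp)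
  have hpxgs : ContDiff ℝ (⊤ : ℕ∞) (pdx g) := contDiff_pdx hgs
  have hpxgD : Differentiable ℝ (pdx g) := hpxgs.differentiable (by simp)
  have hws : ContDiff ℝ (⊤ : ℕ∞) (pdx (pdx g)) := contDiff_pdx hpxgs
  have hwD : Differentiable ℝ (pdx (pdx g)) := hws.differentiable (by simp)
  have hpxus : ContDiff ℝ (⊤ : ℕ∞) (pdx (pdx v)) := contDiff_pdx hus
  have hpxuD : Differentiable ℝ (pdx (pdx v)) := hpxus.differentiable (by simp)
  -- E1 : pdx g = pdx (pdx v) / pdx v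
  have E1 : ∀ q, pdx g q = pdx (pdx v) q / pdx v q := fun q => pdx_log huD hune q
  have E1' : ∀ q, pdx v q * pdx g q = pdx (pdx v) q := fun q => by
    rw [E1 q, mul_comm]; exact div_mul_cancel₀ _ (hune q)
  -- E3 : pdt (pdx v) = pdx v * pdx v + v * pdx (pdx v)
  have E3 : ∀ q, pdt (pdx v) q = pdx v q * pdx v q + v q * pdx (pdx v) q := fun q => by
    have h1 : pdt (pdx v) q = pdx (pdt v) q := pdt_pdx_comm hv q
    have h2 : pdt v = fun r => v r * pdx v r := funext heq
    rw [h1, h2, pdx_mul hvD huD]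
  -- E4 : pdt g = pdx v + v * pdx g
  have E4 : ∀ q, pdt g q = pdx v q + v q * pdx g q := fun q => by
    rw [hgdef, pdt_log huD hune q, E3 q, E1 q, add_div,
      mul_div_cancel_left₀ _ (hune q), mul_div_assoc]
  have comm1 : pdt (pdx (pdx g)) p = pdx (pdt (pdx g)) p := pdt_pdx_comm hpxgs p
  have comm2 : pdt (pdx g) = pdx (pdt g) := funext fun q => pdt_pdx_comm hgs q
  have hvpxgD : Differentiable ℝ fun q => v q * pdx g q := hvD.mul hpxgD
  have E5 : ∀ q, pdx (fun r => pdx v r + v r * pdx g r) q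
      = 2 * pdx (pdx v) q + v q * pdx (pdx g) q := fun q => by
    rw [pdx_add huD hvpxgD, pdx_mul hvD hpxgD, E1' q]
    ring
  have hE4fun : pdt g = fun r => pdx v r + v r * pdx g r := funext E4
  have hE5fun : pdx (fun r => pdx v r + v r * pdx g r)
      = fun q => 2 * pdx (pdx v) q + v q * pdx (pdx g) q := funext E5
  have h2uD : Differentiable ℝ fun q => 2 * pdx (pdx v) q := hpxuD.const_mul 2
  have hvwD : Differentiable ℝ fun q => v q * pdx (pdx g) q := hvD.mul hwD
  calc pdt (pdx (pdx g)) p = pdx (pdx (pdt g)) p := by rw [comm1, comm2]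
    _ = pdx (fun q => 2 * pdx (pdx v) q + v q * pdx (pdx g) q) p := by
        rw [hE4fun, hE5fun]
    _ = 2 * pdx (pdx (pdx v)) p + (pdx v p * pdx (pdx g) p + v p * pdx (pdx (pdx g)) p) := by
        rw [pdx_add h2uD hvwD, pdx_const_mul hpxuD, pdx_mul hvD hwD]
    _ = pdx (fun q => v q * pdx (pdx g) q) p + 2 * pdx (pdx (pdx v)) p := by
        rw [pdx_mul hvD hwD]; ring
end

section
/- Let m ≥ 1, k ≥ 1, N = 2m + k. Let J be an invertible 2m×2m real matrix and let A be the N×N block matrix A = [[J, 0],[0, 0]]. Let B be any N×N real matrix with blocks B = [[B₁₁, B₁₂],[B₂₁, B₂₂]] (B₂₂ of size k×k). If there exists δ > 0 such that rank(A + t·B) ≤ 2m for all real t with |t| < δ, then B₂₂ = 0. -/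
open Matrix Filter Set Topology

private lemma rank_submatrix_cols_le {M N N' : Type*} [Fintype M] [Fintype N] [Fintype N']
    (A : Matrix M N ℝ) (g : N' → N) : (A.submatrix id g).rank ≤ A.rank := by
  rw [Matrix.rank_eq_finrank_span_cols, Matrix.rank_eq_finrank_span_cols]
  apply Submodule.finrank_mono
  apply Submodule.span_mono
  rintro _ ⟨j, rfl⟩
  exact ⟨g j, rfl⟩

private lemma rank_submatrix_le_gen {M N M' N' : Type*} [Fintype M] [Fintype N] [Fintype M']
    [Fintype N'] (A : Matrix M N ℝ) (f : M' → M) (g : N' → N) :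
    (A.submatrix f g).rank ≤ A.rank := by
  have h1 : A.submatrix f g = (A.submatrix id g).submatrix f id := rfl
  have h2 : ((A.submatrix id g).submatrix f id).rank ≤ (A.submatrix id g).rank := by
    rw [← Matrix.rank_transpose ((A.submatrix id g).submatrix f id), Matrix.transpose_submatrix,
      ← Matrix.rank_transpose (A.submatrix id g)]
    exact rank_submatrix_cols_le _ f
  rw [h1]
  exact h2.trans (rank_submatrix_cols_le A g)

/-- If the rank of `A + tB` stays `≤ 2m` for all small `t`, where `A` has the block form
`[[J,0],[0,0]]` with `J` invertible of size `2m`, then the lower-right `k×k` block of `B`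
vanishes. -/
theorem stmt_12 (m k : ℕ) (hm : 1 ≤ m) (hk : 1 ≤ k)
    (J : Matrix (Fin (2 * m)) (Fin (2 * m)) ℝ) (hJ : IsUnit J)
    (B11 : Matrix (Fin (2 * m)) (Fin (2 * m)) ℝ) (B12 : Matrix (Fin (2 * m)) (Fin k) ℝ)
    (B21 : Matrix (Fin k) (Fin (2 * m)) ℝ) (B22 : Matrix (Fin k) (Fin k) ℝ)
    (δ : ℝ) (hδ : 0 < δ)
    (hrank : ∀ t : ℝ, |t| < δ →
      (Matrix.fromBlocks J 0 0 0 + t • Matrix.fromBlocks B11 B12 B21 B22).rank ≤ 2 * m) :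
    B22 = 0 := by
  ext i j
  simp only [Matrix.zero_apply]
  set A : Matrix (Fin (2 * m) ⊕ Fin k) (Fin (2 * m) ⊕ Fin k) ℝ := Matrix.fromBlocks J 0 0 0
  set B : Matrix (Fin (2 * m) ⊕ Fin k) (Fin (2 * m) ⊕ Fin k) ℝ :=
    Matrix.fromBlocks B11 B12 B21 B22
  set f : Fin (2 * m) ⊕ Unit → Fin (2 * m) ⊕ Fin k := Sum.map id (fun _ => i) with hf
  set g : Fin (2 * m) ⊕ Unit → Fin (2 * m) ⊕ Fin k := Sum.map id (fun _ => j) with hg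
  set P : Matrix (Fin (2 * m) ⊕ Unit) (Fin (2 * m) ⊕ Unit) ℝ :=
    Matrix.fromBlocks J 0 (Matrix.of fun _ a => B21 i a) (Matrix.of fun _ _ => B22 i j) with hP
  set Q : Matrix (Fin (2 * m) ⊕ Unit) (Fin (2 * m) ⊕ Unit) ℝ :=
    Matrix.fromBlocks B11 (Matrix.of fun a _ => B12 a j) 0 0 with hQ
  set N : ℝ → Matrix (Fin (2 * m) ⊕ Unit) (Fin (2 * m) ⊕ Unit) ℝ := fun t => P + t • Q with hN
  -- the selected (2m+1)×(2m+1) submatrix has zero determinant for |t| < δ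
  have hdetM : ∀ t : ℝ, |t| < δ → ((A + t • B).submatrix f g).det = 0 := by
    intro t ht
    by_contra h
    have hu : IsUnit ((A + t • B).submatrix f g) :=
      (Matrix.isUnit_iff_isUnit_det _).2 (isUnit_iff_ne_zero.2 h)
    have hcard := Matrix.rank_of_isUnit _ hu
    have hle := (rank_submatrix_le_gen (A + t • B) f g).trans (hrank t ht)
    rw [hcard] at hle
    simp [Fintype.card_sum] at hle
  -- the submatrix equals `N t` with last row scaled by `t`
  have hMN : ∀ t : ℝ, (A + t • B).submatrix f g =
      Matrix.updateRow (N t) (Sum.inr ()) (t • N t (Sum.inr ())) := by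
    intro t
    ext a b
    rcases a with a | a <;> rcases b with b | b <;>
      simp [A, B, N, P, Q, hf, hg, Matrix.updateRow_apply, mul_comm]
  have hdetN : ∀ t : ℝ, t ≠ 0 → |t| < δ → (N t).det = 0 := by
    intro t ht0 htδ
    have h := hdetM t htδ
    rw [hMN t, Matrix.det_updateRow_smul, Matrix.updateRow_eq_self] at h
    rcases mul_eq_zero.1 h with h | h
    · exact absurd h ht0
    · exact h
  -- continuity of `t ↦ det (N t)`
  have hcont : Continuous fun t : ℝ => (N t).det := by
    apply Continuous.matrix_det
    exact continuous_const.add (continuous_id.smul continuous_const)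
  -- limit along `𝓝[>] 0`
  have h1 : Tendsto (fun t : ℝ => (N t).det) (𝓝[>] 0) (𝓝 ((N 0).det)) :=
    (hcont.tendsto 0).mono_left nhdsWithin_le_nhds
  have h2 : Tendsto (fun t : ℝ => (N t).det) (𝓝[>] 0) (𝓝 0) := by
    apply Tendsto.congr' _ (tendsto_const_nhds (α := ℝ))
    filter_upwards [Ioo_mem_nhdsGT_of_mem (Set.left_mem_Ico.2 hδ)] with t ht
    exact (hdetN t (ne_of_gt ht.1) (by rw [abs_of_pos ht.1]; exact ht.2)).symm
  have hdet0 : (N 0).det = 0 := tendsto_nhds_unique h1 h2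
  -- compute `det (N 0) = det J * B22 i j`
  have hN0 : (N 0).det = J.det * B22 i j := by
    have : N 0 = P := by simp [hN]
    rw [this, hP, Matrix.det_fromBlocks_zero₁₂]
    congr 1
    rw [Matrix.det_unique]
    rfl
  have hJd : J.det ≠ 0 := ((Matrix.isUnit_iff_isUnit_det J).1 hJ).ne_zero
  rw [hN0] at hdet0
  rcases mul_eq_zero.1 hdet0 with h | h
  · exact absurd h hJd
  · exact h
end

section
/- Fix integers p, q ≥ 0 and let v : ℝ² → ℝ be smooth (variables x and t) satisfying ∂_t v = (v^q/q!)·∂_x v. Then ∂_t( v^{p+1}/(p+1)! ) = ∂_x( v^{p+q+1} / ((p+q+1)·p!·q!) ). -/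
lemma deriv_pow_div_comp (f : ℝ → ℝ) (x : ℝ) (hf : DifferentiableAt ℝ f x) (n : ℕ) (c : ℝ) :
    deriv (fun y => f y ^ n / c) x = (n : ℝ) * f x ^ (n - 1) * deriv f x / c := by
  rw [deriv_div_const, deriv_fun_pow hf]

/-- Tau-symmetry of the Riemann hierarchy: along `v_t = (v^q/q!) v_x` the density
`v^{p+1}/(p+1)!` is conserved with flux `v^{p+q+1}/((p+q+1)·p!·q!)`. -/
theorem stmt_19 (p q : ℕ) (v : ℝ × ℝ → ℝ) (hv : ContDiff ℝ (⊤ : ℕ∞) v)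
    (heq : ∀ z : ℝ × ℝ, pdt v z = (v z) ^ q / (q.factorial : ℝ) * pdx v z) :
    ∀ z : ℝ × ℝ,
      pdt (fun w => (v w) ^ (p + 1) / ((p + 1).factorial : ℝ)) z
        = pdx (fun w =>
            (v w) ^ (p + q + 1) / (((p + q + 1 : ℕ) : ℝ) * (p.factorial : ℝ) * (q.factorial : ℝ))) z := by
  intro z
  have hd := hv.differentiable (by simp)
  have hx : DifferentiableAt ℝ (fun y => v (y, z.2)) z.1 :=
    (hd _).comp _ (differentiableAt_id.prodMk (differentiableAt_const _))
  have ht : DifferentiableAt ℝ (fun s => v (z.1, s)) z.2 :=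
    (hd _).comp _ ((differentiableAt_const _).prodMk differentiableAt_id)
  have hvz : v (z.1, z.2) = v z := by rw [Prod.mk.eta]
  unfold pdt pdx
  rw [deriv_pow_div_comp _ _ ht, deriv_pow_div_comp _ _ hx]
  have hT : deriv (fun s => v (z.1, s)) z.2 = pdt v z := rfl
  have hX : deriv (fun y => v (y, z.2)) z.1 = pdx v z := rfl
  rw [hT, hX, heq z, hvz]
  have hfp : ((p + 1).factorial : ℝ) = (p + 1 : ℕ) * p.factorial := by
    rw [Nat.factorial_succ]; push_cast; ring
  have hp0 : (p.factorial : ℝ) ≠ 0 := Nat.cast_ne_zero.mpr p.factorial_ne_zero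
  have hq0 : (q.factorial : ℝ) ≠ 0 := Nat.cast_ne_zero.mpr q.factorial_ne_zero
  have hpq : ((p + q + 1 : ℕ) : ℝ) ≠ 0 := by positivity
  have hp1 : ((p + 1 : ℕ) : ℝ) ≠ 0 := by positivity
  simp only [Nat.add_sub_cancel]
  rw [hfp]
  push_cast
  field_simp
  ring
end
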